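/- Let G be a group with word length ∥·∥ and word metric d coming from a symmetric generating set (possibly infinite), suppose the word metric is δ-hyperbolic (every geodesic triangle is δ-slim), and suppose G has conjugacy bounds with constant K ≥ 1. Let B ≥ 1, let R be a set of elements of G each of which is conjugate in G to an element of word length at most B, and let g ∈ G. Then there exists a constant L ≥ 0, depending only on B, ∥g∥, δ and K, such that every r ∈ R ∩ Rg lies in the L-horoball neighbourhood of the centralizer C(g) = { c ∈ G : cg = gc }; that is, for every r ∈ R with rg ∈ R there exists c ∈ C(g) with d(r, c) ≤ ∥c∥ + L. -/

import Mathlib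

/-- The word length of `g` with respect to a generating set `S`: the least `n` such that
`g` is a product of `n` elements of `S`. -/
noncomputable def wordLength {G : Type*} [Group G] (S : Set G) (g : G) : ℕ :=
  sInf {n : ℕ | ∃ l : List G, (∀ x ∈ l, x ∈ S) ∧ l.length = n ∧ l.prod = g}

/-- The word metric `d(x,y) = ∥x⁻¹ y∥` associated to the generating set `S`. -/
noncomputable def wordDist {G : Type*} [Group G] (S : Set G) (x y : G) : ℕ :=
  wordLength S (x⁻¹ * y)

/-- A geodesic in the (integer-valued) word metric: a finite sequence
`γ 0, γ 1, …, γ N` with `d(γ i, γ j) = |i - j|` for all `i, j`. -/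
def IsWordGeodesic {G : Type*} [Group G] (S : Set G) (N : ℕ) (γ : Fin (N + 1) → G) : Prop :=
  ∀ i j : Fin (N + 1), (wordDist S (γ i) (γ j) : ℤ) = |(i : ℤ) - (j : ℤ)|

/-- The word metric is `δ`-hyperbolic (`δ`-slim triangles): for any triangle of geodesics,
each side lies in the closed `δ`-neighbourhood of the union of the other two.  (Since the
quantification is over all vertices and all geodesics, and reversal of a geodesic is a
geodesic, it suffices to require this for the side from `x` to `z`.) -/
def WordSlimTriangles {G : Type*} [Group G] (S : Set G) (δ : ℝ) : Prop :=
  ∀ (x y z : G) (N₁ N₂ N₃ : ℕ)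
    (γ₁ : Fin (N₁ + 1) → G) (γ₂ : Fin (N₂ + 1) → G) (γ₃ : Fin (N₃ + 1) → G),
    IsWordGeodesic S N₁ γ₁ → IsWordGeodesic S N₂ γ₂ → IsWordGeodesic S N₃ γ₃ →
    γ₁ 0 = x → γ₁ (Fin.last N₁) = y →
    γ₂ 0 = y → γ₂ (Fin.last N₂) = z →
    γ₃ 0 = x → γ₃ (Fin.last N₃) = z →
    ∀ i : Fin (N₃ + 1), ∃ p ∈ Set.range γ₁ ∪ Set.range γ₂, (wordDist S (γ₃ i) p : ℝ) ≤ δ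

/-- `G` (with word length `∥⬝∥`) has conjugacy bounds with constant `K`: whenever `a` and
`b` are conjugate there is `v` with `a = v b v⁻¹` and `∥v∥ ≤ K (∥a∥ + ∥b∥)`. -/
def HasConjugacyBounds {G : Type*} [Group G] (S : Set G) (K : ℝ) : Prop :=
  ∀ a b : G, IsConj a b →
    ∃ v : G, a = v * b * v⁻¹ ∧
      (wordLength S v : ℝ) ≤ K * ((wordLength S a : ℝ) + (wordLength S b : ℝ))

/-!
For `x = v s v⁻¹` with `∥s∥ ≤ B`, the geodesic quadrilateral `1, v, x v = v s, x` has the short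
side `[v, x v]`, so by slim triangles a geodesic `[1, x]` fellow-travels `[1, v]` and `x [1, v]`
up to near its midpoint. Hence `x` moves a point `p` of `[1, x]` by at most
`|d(1, p) - d(p, x)| + 12 δ + 3 B`, which is bounded at the midpoint.

Apply this to `r` and to `r g` at midpoints `m`, `m'` of `[1, r]` and `[1, r g]`; these midpoints
are close, so `m⁻¹ g m = (m⁻¹ r m)⁻¹ (m⁻¹ m') (m'⁻¹ r g m') (m'⁻¹ m)` is short. The conjugacy
bound gives a short `u` with `u⁻¹ g u = m⁻¹ g m`, so `c = m u⁻¹` centralizes `g`, and since `m`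
is a midpoint of `[1, r]`, `d(r, c) ≤ ∥c∥ + 2 ∥u∥ + 1`.
-/

open Pointwise

structure IsSymmGenerating {G : Type*} [Group G] (S : Set G) : Prop where
  inv_mem : ∀ s ∈ S, s⁻¹ ∈ S
  closure_eq_top : Subgroup.closure S = ⊤

/-- A geodesic segment is kept as its set of points: slim-triangle arguments only ask which side a
point lies on, and distances along a side are recovered from distances to an endpoint. -/
def IsGeodesicSegment {G : Type*} [Group G] (S : Set G) (a b : G) (P : Set G) : Prop :=
  ∃ (N : ℕ) (γ : Fin (N + 1) → G),
    IsWordGeodesic S N γ ∧ γ 0 = a ∧ γ (Fin.last N) = b ∧ Set.range γ = P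

section WordMetric

variable {G : Type*} [Group G] {S : Set G} {δ : ℝ}

local notation "d⟨" a ", " b "⟩" => (wordDist S a b : ℝ)

theorem IsSymmGenerating.exists_list_prod_eq (hS : IsSymmGenerating S) (x : G) :
    ∃ l : List G, (∀ y ∈ l, y ∈ S) ∧ l.prod = x := by
  have hinv : S⁻¹ ⊆ S := fun s hs => by simpa using hS.inv_mem _ hs
  apply Submonoid.exists_list_of_mem_closure
  rw [← Set.union_eq_self_of_subset_right hinv, ← Subgroup.closure_toSubmonoid,
    hS.closure_eq_top]
  trivial

theorem wordLength_prod_le {l : List G} (hl : ∀ y ∈ l, y ∈ S) :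
    wordLength S l.prod ≤ l.length := by
  unfold wordLength
  exact Nat.sInf_le ⟨l, hl, rfl, rfl⟩

theorem IsSymmGenerating.exists_list_length_eq (hS : IsSymmGenerating S) (x : G) :
    ∃ l : List G, (∀ y ∈ l, y ∈ S) ∧ l.length = wordLength S x ∧ l.prod = x := by
  obtain ⟨l, hl, rfl⟩ := hS.exists_list_prod_eq x
  have hne :
      {n | ∃ l' : List G, (∀ y ∈ l', y ∈ S) ∧ l'.length = n ∧ l'.prod = l.prod}.Nonempty :=
    ⟨l.length, l, hl, rfl, rfl⟩
  exact Nat.sInf_mem hne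

theorem IsSymmGenerating.wordLength_mul_le (hS : IsSymmGenerating S) (x y : G) :
    wordLength S (x * y) ≤ wordLength S x + wordLength S y := by
  obtain ⟨l₁, h₁, e₁, rfl⟩ := hS.exists_list_length_eq x
  obtain ⟨l₂, h₂, e₂, rfl⟩ := hS.exists_list_length_eq y
  rw [← e₁, ← e₂, ← List.length_append, ← List.prod_append]
  exact wordLength_prod_le fun z hz => (List.mem_append.mp hz).elim (h₁ z) (h₂ z)

theorem IsSymmGenerating.wordLength_inv_le (hS : IsSymmGenerating S) (x : G) :
    wordLength S x⁻¹ ≤ wordLength S x := by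
  obtain ⟨l, hl, e, rfl⟩ := hS.exists_list_length_eq x
  rw [← e, List.prod_inv_reverse]
  refine (wordLength_prod_le ?_).trans (by simp)
  intro y hy
  rw [← inv_inv y]
  exact hS.inv_mem _ (hl _ (by simpa using hy))

theorem IsSymmGenerating.wordLength_inv (hS : IsSymmGenerating S) (x : G) :
    wordLength S x⁻¹ = wordLength S x :=
  le_antisymm (hS.wordLength_inv_le x) (by simpa using hS.wordLength_inv_le x⁻¹)

theorem wordDist_mul_left (z a b : G) : wordDist S (z * a) (z * b) = wordDist S a b := by
  simp [wordDist, mul_assoc]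

theorem wordDist_one_left (a : G) : wordDist S 1 a = wordLength S a := by
  simp [wordDist]

theorem wordDist_self_mul (a b : G) : wordDist S a (a * b) = wordLength S b := by
  simp [wordDist]

theorem IsSymmGenerating.wordDist_comm (hS : IsSymmGenerating S) (a b : G) :
    wordDist S a b = wordDist S b a := by
  rw [wordDist, ← hS.wordLength_inv, mul_inv_rev, inv_inv, wordDist]

theorem IsSymmGenerating.wordDist_triangle (hS : IsSymmGenerating S) (a b c : G) :
    d⟨a, c⟩ ≤ d⟨a, b⟩ + d⟨b, c⟩ := by
  have h := hS.wordLength_mul_le (a⁻¹ * b) (b⁻¹ * c)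
  rw [mul_assoc, mul_inv_cancel_left] at h
  exact_mod_cast h

theorem IsSymmGenerating.wordDist_mul_self_le (hS : IsSymmGenerating S) (x p q : G) :
    d⟨p, x * p⟩ ≤ d⟨q, x * q⟩ + 2 * d⟨p, q⟩ := by
  have h₁ := hS.wordDist_triangle p q (x * p)
  have h₂ := hS.wordDist_triangle q (x * q) (x * p)
  rw [wordDist_mul_left, hS.wordDist_comm q p] at h₂
  linarith

theorem wordDist_prod_take_le {l : List G} (hl : ∀ y ∈ l, y ∈ S) {i j : ℕ} (hij : i ≤ j) :
    wordDist S (l.take i).prod (l.take j).prod ≤ j - i := by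
  have hsplit := List.prod_take_mul_prod_drop (l.take j) i
  rw [List.take_take, min_eq_left hij] at hsplit
  rw [wordDist, ← hsplit, inv_mul_cancel_left]
  refine (wordLength_prod_le fun y hy =>
    hl y (List.mem_of_mem_take (List.mem_of_mem_drop hy))).trans ?_
  simp only [List.length_drop, List.length_take]
  omega

theorem IsWordGeodesic.wordDist_eq {N : ℕ} {γ : Fin (N + 1) → G} (hγ : IsWordGeodesic S N γ)
    (i j : Fin (N + 1)) : d⟨γ i, γ j⟩ = |(i : ℝ) - j| := by
  exact_mod_cast hγ i j

theorem IsSymmGenerating.isWordGeodesic_of_wordDist_le (hS : IsSymmGenerating S) {N : ℕ}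
    {γ : Fin (N + 1) → G} (hle : ∀ i j : Fin (N + 1), i ≤ j → d⟨γ i, γ j⟩ ≤ (j : ℝ) - i)
    (hN : wordDist S (γ 0) (γ (Fin.last N)) = N) : IsWordGeodesic S N γ := by
  have heq : ∀ i j : Fin (N + 1), i ≤ j → d⟨γ i, γ j⟩ = (j : ℝ) - i := by
    intro i j hij
    have h₀ := hle 0 i (Fin.zero_le i)
    have h₁ := hle j (Fin.last N) (Fin.le_last j)
    have t₁ := hS.wordDist_triangle (γ 0) (γ i) (γ (Fin.last N))
    have t₂ := hS.wordDist_triangle (γ i) (γ j) (γ (Fin.last N))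
    simp only [Fin.val_zero, Fin.val_last, CharP.cast_eq_zero, sub_zero, hN] at h₀ h₁ t₁
    linarith [hle i j hij]
  intro i j
  have key : (wordDist S (γ i) (γ j) : ℝ) = |(i : ℝ) - j| := by
    rcases le_total i j with hij | hji
    · rw [heq i j hij, abs_sub_comm, abs_of_nonneg (by simpa using hij)]
    · rw [hS.wordDist_comm, heq j i hji, abs_of_nonneg (by simpa using hji)]
  exact_mod_cast key

theorem IsSymmGenerating.exists_isGeodesicSegment (hS : IsSymmGenerating S) (a b : G) :
    ∃ P, IsGeodesicSegment S a b P := by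
  obtain ⟨l, hl, hlen, hprod⟩ := hS.exists_list_length_eq (a⁻¹ * b)
  refine ⟨_, l.length, fun i => a * (l.take i).prod,
    hS.isWordGeodesic_of_wordDist_le (fun i j hij => ?_) ?_, by simp, ?_, rfl⟩
  · rw [wordDist_mul_left]
    have hij' : (i : ℕ) ≤ j := hij
    rw [← Nat.cast_sub hij']
    exact_mod_cast wordDist_prod_take_le hl hij'
  · simp only [wordDist_mul_left, Fin.val_zero, Fin.val_last, List.take_zero, List.prod_nil,
      List.take_length, hprod, wordDist_one_left, ← hlen]
  · simp [hprod]

namespace IsGeodesicSegment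

variable {a b : G} {P : Set G}

theorem symm (h : IsGeodesicSegment S a b P) : IsGeodesicSegment S b a P := by
  obtain ⟨N, γ, hγ, rfl, rfl, rfl⟩ := h
  refine ⟨N, fun i => γ i.rev, fun i j => ?_, by simp, by simp,
    Fin.rev_surjective.range_comp γ⟩
  rw [hγ i.rev j.rev, abs_sub_comm]
  congr 1
  simp only [Fin.val_rev]
  omega

theorem smul (h : IsGeodesicSegment S a b P) (z : G) :
    IsGeodesicSegment S (z * a) (z * b) (z • P) := by
  obtain ⟨N, γ, hγ, rfl, rfl, rfl⟩ := h
  exact ⟨N, fun i => z * γ i, fun i j => by simpa [wordDist_mul_left] using hγ i j, rfl, rfl,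
    (Set.smul_set_range z γ).symm⟩

theorem wordDist_eq (h : IsGeodesicSegment S a b P) {p q : G} (hp : p ∈ P) (hq : q ∈ P) :
    d⟨p, q⟩ = |d⟨a, p⟩ - d⟨a, q⟩| := by
  obtain ⟨N, γ, hγ, rfl, rfl, rfl⟩ := h
  obtain ⟨i, rfl⟩ := hp
  obtain ⟨j, rfl⟩ := hq
  simp [hγ.wordDist_eq]

theorem wordDist_add (h : IsGeodesicSegment S a b P) {p : G} (hp : p ∈ P) :
    d⟨a, p⟩ + d⟨p, b⟩ = d⟨a, b⟩ := by
  obtain ⟨N, γ, hγ, rfl, rfl, rfl⟩ := h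
  obtain ⟨i, rfl⟩ := hp
  have hi : (i : ℝ) ≤ N := by exact_mod_cast Fin.is_le i
  simp [hγ.wordDist_eq, abs_of_nonpos (sub_nonpos.mpr hi)]

theorem exists_midpoint (h : IsGeodesicSegment S a b P) :
    ∃ m ∈ P, 2 * d⟨a, m⟩ ≤ d⟨a, b⟩ ∧ d⟨a, b⟩ ≤ 2 * d⟨a, m⟩ + 1 := by
  obtain ⟨N, γ, hγ, rfl, rfl, rfl⟩ := h
  refine ⟨γ ⟨N / 2, by omega⟩, Set.mem_range_self _, ?_⟩
  simp only [hγ.wordDist_eq, Fin.val_zero, Fin.val_last, CharP.cast_eq_zero, zero_sub, abs_neg,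
    Nat.abs_cast]
  constructor
  · exact_mod_cast Nat.mul_div_le N 2
  · exact_mod_cast (by omega : N ≤ 2 * (N / 2) + 1)

end IsGeodesicSegment

theorem WordSlimTriangles.exists_near (hhyp : WordSlimTriangles S δ) {x y z : G}
    {P₁ P₂ P₃ : Set G} (h₁ : IsGeodesicSegment S x y P₁) (h₂ : IsGeodesicSegment S y z P₂)
    (h₃ : IsGeodesicSegment S x z P₃) {p : G} (hp : p ∈ P₃) :
    ∃ q ∈ P₁ ∪ P₂, d⟨p, q⟩ ≤ δ := by
  obtain ⟨N₁, γ₁, hγ₁, h₁0, h₁N, rfl⟩ := h₁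
  obtain ⟨N₂, γ₂, hγ₂, h₂0, h₂N, rfl⟩ := h₂
  obtain ⟨N₃, γ₃, hγ₃, h₃0, h₃N, rfl⟩ := h₃
  obtain ⟨i, rfl⟩ := hp
  exact hhyp x y z N₁ N₂ N₃ γ₁ γ₂ γ₃ hγ₁ hγ₂ hγ₃ h₁0 h₁N h₂0 h₂N h₃0 h₃N i

theorem IsGeodesicSegment.wordDist_le_of_slim (hS : IsSymmGenerating S)
    (hhyp : WordSlimTriangles S δ) {a b c p q : G} {P₁ P₂ : Set G}
    (h₁ : IsGeodesicSegment S a b P₁) (h₂ : IsGeodesicSegment S a c P₂) (hp : p ∈ P₁)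
    (hq : q ∈ P₂) :
    d⟨p, q⟩ ≤ |d⟨a, p⟩ - d⟨a, q⟩| + 2 * δ + 2 * d⟨b, c⟩ := by
  have tri := hS.wordDist_triangle
  have comm : ∀ y z : G, d⟨y, z⟩ = d⟨z, y⟩ := fun y z => by rw [hS.wordDist_comm]
  obtain ⟨ρ, hρ⟩ := hS.exists_isGeodesicSegment b c
  obtain ⟨q', hq' | hq', hqq'⟩ := hhyp.exists_near h₁ hρ h₂ hq
  · have hpq' := h₁.wordDist_eq hp hq'
    have hq'q : |d⟨a, q⟩ - d⟨a, q'⟩| ≤ δ := by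
      rw [abs_le]
      constructor <;> linarith [tri a q q', tri a q' q, comm q' q]
    linarith [tri p q' q, comm q' q, abs_sub_le (d⟨a, p⟩) (d⟨a, q⟩) (d⟨a, q'⟩),
      (Nat.cast_nonneg _ : (0 : ℝ) ≤ d⟨b, c⟩)]
  · have hqb : d⟨q, b⟩ ≤ δ + d⟨b, c⟩ := by
      linarith [tri q q' b, comm q' b, hρ.wordDist_add hq',
        (Nat.cast_nonneg _ : (0 : ℝ) ≤ d⟨q', c⟩)]
    linarith [h₁.wordDist_add hp, tri a q b, tri p b q, comm b q,
      neg_le_abs (d⟨a, p⟩ - d⟨a, q⟩)]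

theorem wordDist_mul_self_le_of_near_conjugator (hS : IsSymmGenerating S) (hδ : 0 ≤ δ)
    (hhyp : WordSlimTriangles S δ) {x v s : G} (hx : x * v = v * s) {B : ℝ}
    (hs : (wordLength S s : ℝ) ≤ B) {Γ A : Set G} (hΓ : IsGeodesicSegment S 1 x Γ)
    (hA : IsGeodesicSegment S 1 v A) {p a : G} (hp : p ∈ Γ) (ha : a ∈ A)
    (hpa : d⟨p, a⟩ ≤ 2 * δ) :
    d⟨p, x * p⟩ ≤ |d⟨1, p⟩ - d⟨p, x⟩| + 12 * δ + 3 * B := by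
  have tri := hS.wordDist_triangle
  have comm : ∀ y z : G, d⟨y, z⟩ = d⟨z, y⟩ := fun y z => by rw [hS.wordDist_comm]
  have hB : 0 ≤ B := (Nat.cast_nonneg _).trans hs
  have hΔ₁ := le_abs_self (d⟨1, p⟩ - d⟨p, x⟩)
  have hΔ₂ := neg_abs_le (d⟨1, p⟩ - d⟨p, x⟩)
  have hΓp := hΓ.wordDist_add hp
  have hap₁ : d⟨1, a⟩ ≤ d⟨1, p⟩ + 2 * δ := by linarith [tri 1 p a]
  have hap₂ : d⟨1, p⟩ ≤ d⟨1, a⟩ + 2 * δ := by linarith [tri 1 a p, comm a p]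
  have hxa_xp : d⟨x * a, x * p⟩ ≤ 2 * δ := by rw [wordDist_mul_left, comm]; exact hpa
  have hx_xa : d⟨x, x * a⟩ = d⟨1, a⟩ := by rw [wordDist_self_mul, wordDist_one_left]
  have hv_vs : d⟨v, v * s⟩ ≤ B := by rw [wordDist_self_mul]; exact hs
  have hxA : IsGeodesicSegment S x (v * s) (x • A) := by
    simpa only [mul_one, hx] using hA.smul x
  obtain ⟨T, hT⟩ := hS.exists_isGeodesicSegment 1 (v * s)
  obtain ⟨q, hq, hxa_q⟩ := hhyp.exists_near hΓ.symm hT hxA (Set.smul_mem_smul_set ha)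
  rw [smul_eq_mul] at hxa_q
  rcases hq with hq | hq
  · have hqx₁ : d⟨q, x⟩ ≤ d⟨1, a⟩ + δ := by linarith [tri x (x * a) q, comm q x]
    have hqx₂ : d⟨1, a⟩ ≤ d⟨q, x⟩ + δ := by
      linarith [tri x q (x * a), comm q (x * a), comm q x]
    have hpq : d⟨p, q⟩ ≤ |d⟨1, p⟩ - d⟨p, x⟩| + 3 * δ := by
      rw [hΓ.wordDist_eq hp hq, abs_le]
      constructor <;> linarith [hΓ.wordDist_add hq]
    linarith [tri p q (x * p), tri q (x * a) (x * p), comm q (x * a)]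
  obtain ⟨V, hV⟩ := hS.exists_isGeodesicSegment v (v * s)
  obtain ⟨q', hq' | hq', hqq'⟩ := hhyp.exists_near hA hV hT hq
  · have hxa_q' : d⟨x * a, q'⟩ ≤ 2 * δ := by linarith [tri (x * a) q q']
    have hi₁ : d⟨1, x⟩ ≤ d⟨1, q'⟩ + 2 * δ + d⟨1, a⟩ := by
      linarith [tri 1 q' x, tri q' (x * a) x, comm q' (x * a), comm (x * a) x]
    have hvx : d⟨1, v⟩ ≤ d⟨v, x⟩ + B := by
      have h := tri x v (x * v)
      rw [wordDist_self_mul, ← wordDist_one_left, hx] at h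
      linarith [comm x v]
    have hi₂ : d⟨1, q'⟩ ≤ d⟨1, a⟩ + 2 * δ + B := by
      linarith [hA.wordDist_add hq', tri v q' x, tri q' (x * a) x, comm q' (x * a),
        comm (x * a) x, comm v q']
    have haq' : d⟨a, q'⟩ ≤ |d⟨1, p⟩ - d⟨p, x⟩| + 6 * δ + B := by
      rw [hA.wordDist_eq ha hq', abs_le]
      constructor <;> linarith
    linarith [tri p a (x * p), tri a q' (x * p), tri q' (x * a) (x * p), comm q' (x * a)]
  · have hxa_vs : d⟨x * a, v * s⟩ ≤ 2 * δ + B := by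
      linarith [tri (x * a) q (v * s), tri q q' (v * s), hV.wordDist_add hq',
        (Nat.cast_nonneg _ : (0 : ℝ) ≤ d⟨v, q'⟩)]
    have hav : d⟨a, v⟩ ≤ 2 * δ + B := by rwa [← wordDist_mul_left x, hx]
    have hpv : d⟨p, v⟩ ≤ 4 * δ + B := by linarith [tri p a v]
    have hdisp := hS.wordDist_mul_self_le x p v
    rw [hx] at hdisp
    linarith [abs_nonneg (d⟨1, p⟩ - d⟨p, x⟩)]

theorem wordDist_mul_self_le_of_isConj (hS : IsSymmGenerating S) (hδ : 0 ≤ δ)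
    (hhyp : WordSlimTriangles S δ) {x s : G} (hxs : IsConj x s) {B : ℝ}
    (hs : (wordLength S s : ℝ) ≤ B) {Γ : Set G} (hΓ : IsGeodesicSegment S 1 x Γ) {p : G}
    (hp : p ∈ Γ) :
    d⟨p, x * p⟩ ≤ |d⟨1, p⟩ - d⟨p, x⟩| + 12 * δ + 3 * B := by
  have tri := hS.wordDist_triangle
  have comm : ∀ y z : G, d⟨y, z⟩ = d⟨z, y⟩ := fun y z => by rw [hS.wordDist_comm]
  obtain ⟨v, hx⟩ : ∃ v : G, x * v = v * s := by
    obtain ⟨c, hc⟩ := hxs.symm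
    exact ⟨c, hc.symm⟩
  obtain ⟨A, hA⟩ := hS.exists_isGeodesicSegment 1 v
  obtain ⟨H, hH⟩ := hS.exists_isGeodesicSegment v x
  obtain ⟨q, hq | hq, hpq⟩ := hhyp.exists_near hA hH hΓ hp
  · exact wordDist_mul_self_le_of_near_conjugator hS hδ hhyp hx hs hΓ hA hp hq (by linarith)
  have hv_vs : d⟨v, v * s⟩ ≤ B := by rw [wordDist_self_mul]; exact hs
  obtain ⟨V, hV⟩ := hS.exists_isGeodesicSegment v (v * s)
  have hxA : IsGeodesicSegment S x (v * s) (x • A) := by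
    simpa only [mul_one, hx] using hA.smul x
  obtain ⟨q', hq' | hq', hqq'⟩ := hhyp.exists_near hV hxA.symm hH hq
  · have hpv : d⟨p, v⟩ ≤ 2 * δ + B := by
      linarith [tri p q q', tri p q' v, comm q' v, hV.wordDist_add hq',
        (Nat.cast_nonneg _ : (0 : ℝ) ≤ d⟨q', v * s⟩)]
    have hdisp := hS.wordDist_mul_self_le x p v
    rw [hx] at hdisp
    linarith [abs_nonneg (d⟨1, p⟩ - d⟨p, x⟩)]
  -- `x⁻¹ p` is close to `A`: the configuration above for `x⁻¹ = v s⁻¹ v⁻¹`.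
  obtain ⟨a, ha, rfl⟩ := Set.mem_smul_set.mp hq'
  rw [smul_eq_mul] at hqq'
  have hx' : x⁻¹ * v = v * s⁻¹ := by
    rw [eq_mul_inv_iff_mul_eq, mul_assoc, ← hx, inv_mul_cancel_left]
  have hΓ' : IsGeodesicSegment S 1 x⁻¹ (x⁻¹ • Γ) := by
    simpa only [mul_one, inv_mul_cancel] using (hΓ.smul x⁻¹).symm
  have hpa : d⟨x⁻¹ * p, a⟩ ≤ 2 * δ := by
    rw [← wordDist_mul_left x, mul_inv_cancel_left]
    linarith [tri p q (x * a)]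
  have h := wordDist_mul_self_le_of_near_conjugator hS hδ hhyp hx' (B := B)
    (by rwa [hS.wordLength_inv]) hΓ' hA (Set.smul_mem_smul_set hp) ha hpa
  have e₁ : wordDist S (x⁻¹ * p) (x⁻¹ * (x⁻¹ * p)) = wordDist S p (x * p) := by
    rw [wordDist_mul_left, ← wordDist_mul_left x, mul_inv_cancel_left, hS.wordDist_comm]
  have e₂ : wordDist S 1 (x⁻¹ * p) = wordDist S p x := by
    rw [← wordDist_mul_left x, mul_one, mul_inv_cancel_left, hS.wordDist_comm]
  have e₃ : wordDist S (x⁻¹ * p) x⁻¹ = wordDist S 1 p := by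
    rw [← wordDist_mul_left x, mul_inv_cancel_left, mul_inv_cancel, hS.wordDist_comm]
  simp only [smul_eq_mul] at h
  rwa [e₁, e₂, e₃, abs_sub_comm] at h

theorem wordDist_mul_self_midpoint_le (hS : IsSymmGenerating S) (hδ : 0 ≤ δ)
    (hhyp : WordSlimTriangles S δ) {x s : G} (hxs : IsConj x s) {B : ℝ}
    (hs : (wordLength S s : ℝ) ≤ B) {Γ : Set G} (hΓ : IsGeodesicSegment S 1 x Γ) {m : G}
    (hm : m ∈ Γ) (hmid : 2 * d⟨1, m⟩ ≤ d⟨1, x⟩ ∧ d⟨1, x⟩ ≤ 2 * d⟨1, m⟩ + 1) :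
    d⟨m, x * m⟩ ≤ 12 * δ + 3 * B + 1 := by
  have hcentre : |d⟨1, m⟩ - d⟨m, x⟩| ≤ 1 := by
    rw [abs_le]
    constructor <;> linarith [hΓ.wordDist_add hm]
  linarith [wordDist_mul_self_le_of_isConj hS hδ hhyp hxs hs hΓ hm]

theorem wordLength_conj_midpoint_le (hS : IsSymmGenerating S) (hδ : 0 ≤ δ)
    (hhyp : WordSlimTriangles S δ) {r g s₁ s₂ : G} {B : ℝ} (h₁ : IsConj r s₁)
    (hs₁ : (wordLength S s₁ : ℝ) ≤ B) (h₂ : IsConj (r * g) s₂)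
    (hs₂ : (wordLength S s₂ : ℝ) ≤ B) {Γ : Set G} (hΓ : IsGeodesicSegment S 1 r Γ) {m : G}
    (hm : m ∈ Γ) (hmid : 2 * d⟨1, m⟩ ≤ d⟨1, r⟩ ∧ d⟨1, r⟩ ≤ 2 * d⟨1, m⟩ + 1) :
    (wordLength S (m⁻¹ * g * m) : ℝ) ≤
      2 * (12 * δ + 3 * B + 1) + 2 * (2 * δ + 3 * wordLength S g + 1) := by
  have tri := hS.wordDist_triangle
  have comm : ∀ y z : G, d⟨y, z⟩ = d⟨z, y⟩ := fun y z => by rw [hS.wordDist_comm]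
  have mul_le : ∀ y z : G, (wordLength S (y * z) : ℝ) ≤ wordLength S y + wordLength S z :=
    fun y z => by exact_mod_cast hS.wordLength_mul_le y z
  obtain ⟨Γ', hΓ'⟩ := hS.exists_isGeodesicSegment 1 (r * g)
  obtain ⟨m', hm', hmid'⟩ := hΓ'.exists_midpoint
  have e₁ := wordDist_mul_self_midpoint_le hS hδ hhyp h₁ hs₁ hΓ hm hmid
  have e₂ := wordDist_mul_self_midpoint_le hS hδ hhyp h₂ hs₂ hΓ' hm' hmid'
  have hg : d⟨r, r * g⟩ = wordLength S g := by rw [wordDist_self_mul]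
  have hmm' : d⟨m, m'⟩ ≤ 2 * δ + 3 * wordLength S g + 1 := by
    have hk : |d⟨1, m⟩ - d⟨1, m'⟩| ≤ wordLength S g + 1 := by
      rw [abs_le]
      constructor <;> linarith [tri 1 r (r * g), tri 1 (r * g) r, comm (r * g) r]
    linarith [hΓ.wordDist_le_of_slim hS hhyp hΓ' hm hm']
  have hm'm := comm m' m
  have hinv : (wordLength S (m⁻¹ * (r * m))⁻¹ : ℝ) = wordLength S (m⁻¹ * (r * m)) := by
    rw [hS.wordLength_inv]
  unfold wordDist at e₁ e₂ hmm' hm'm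
  rw [show m⁻¹ * g * m =
    (m⁻¹ * (r * m))⁻¹ * ((m⁻¹ * m') * ((m'⁻¹ * (r * g * m')) * (m'⁻¹ * m))) by group]
  linarith [mul_le (m⁻¹ * (r * m))⁻¹ ((m⁻¹ * m') * ((m'⁻¹ * (r * g * m')) * (m'⁻¹ * m))),
    mul_le (m⁻¹ * m') ((m'⁻¹ * (r * g * m')) * (m'⁻¹ * m)),
    mul_le (m'⁻¹ * (r * g * m')) (m'⁻¹ * m)]

theorem wordDist_le_wordLength_mul_inv_add (hS : IsSymmGenerating S) {r m : G} {Γ : Set G}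
    (hΓ : IsGeodesicSegment S 1 r Γ) (hm : m ∈ Γ) (hmid : d⟨1, r⟩ ≤ 2 * d⟨1, m⟩ + 1)
    (u : G) :
    d⟨r, m * u⁻¹⟩ ≤ wordLength S (m * u⁻¹) + 2 * wordLength S u + 1 := by
  have h₁ := hS.wordDist_triangle r m (m * u⁻¹)
  have h₂ : (wordLength S m : ℝ) ≤ wordLength S (m * u⁻¹) + wordLength S u := by
    exact_mod_cast inv_mul_cancel_right m u ▸ hS.wordLength_mul_le (m * u⁻¹) u
  rw [wordDist_self_mul, hS.wordLength_inv, hS.wordDist_comm r m] at h₁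
  rw [← wordDist_one_left] at h₂
  linarith [hΓ.wordDist_add hm]

end WordMetric

/-- Suppose the word metric of a symmetric generating set `S` on `G` is `δ`-hyperbolic and
`G` has conjugacy bounds with constant `K ≥ 1`.  Let `B ≥ 1` and `g ∈ G`.  Then there is a
constant `L ≥ 0`, depending only on `B`, `∥g∥`, `δ` and `K`, such that for every set `R`
of elements each conjugate to an element of word length at most `B`, every `r ∈ R ∩ Rg`
lies in the `L`-horoball neighbourhood of the centralizer `C(g)`: for every `r ∈ R` with
`rg ∈ R` there is `c` commuting with `g` such that `d(r, c) ≤ ∥c∥ + L`. -/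
theorem statement4 {G : Type*} [Group G]
    (S : Set G) (hSsymm : ∀ s ∈ S, s⁻¹ ∈ S) (hSgen : Subgroup.closure S = ⊤)
    (δ : ℝ) (hδ : 0 ≤ δ) (hhyp : WordSlimTriangles S δ)
    (K : ℝ) (hK : 1 ≤ K) (hcb : HasConjugacyBounds S K)
    (B : ℝ) (hB : 1 ≤ B) (g : G) :
    ∃ L : ℝ, 0 ≤ L ∧
      ∀ R : Set G, (∀ r ∈ R, ∃ s : G, IsConj r s ∧ (wordLength S s : ℝ) ≤ B) →
        ∀ r ∈ R, r * g ∈ R →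
          ∃ c : G, c * g = g * c ∧ (wordDist S r c : ℝ) ≤ (wordLength S c : ℝ) + L := by
  have hS : IsSymmGenerating S := ⟨hSsymm, hSgen⟩
  set D : ℝ := 2 * (12 * δ + 3 * B + 1) + 2 * (2 * δ + 3 * wordLength S g + 1)
  have hD : 0 ≤ wordLength S g + D := by
    linarith [(Nat.cast_nonneg _ : (0 : ℝ) ≤ wordLength S g)]
  refine ⟨2 * K * (wordLength S g + D) + 1, by nlinarith, fun R hR r hr hrg => ?_⟩
  obtain ⟨s₁, h₁, hs₁⟩ := hR r hr
  obtain ⟨s₂, h₂, hs₂⟩ := hR (r * g) hrg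
  obtain ⟨Γ, hΓ⟩ := hS.exists_isGeodesicSegment 1 r
  obtain ⟨m, hm, hmid⟩ := hΓ.exists_midpoint
  have hconj := wordLength_conj_midpoint_le hS hδ hhyp h₁ hs₁ h₂ hs₂ hΓ hm hmid
  obtain ⟨u, hu, hu_le⟩ := hcb g (m⁻¹ * g * m) (isConj_iff.mpr ⟨m⁻¹, by group⟩)
  refine ⟨m * u⁻¹, ?_, ?_⟩
  · conv_lhs => rw [hu]
    group
  · have hu_le' : (wordLength S u : ℝ) ≤ K * (wordLength S g + D) :=
      hu_le.trans (by gcongr)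
    linarith [wordDist_le_wordLength_mul_inv_add hS hΓ hm hmid.2 u]
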